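/- arXiv:2003.04160 — 5 statements merged into one kernel-verified Lean document; each statement's English description precedes it below -/
import Mathlib

section
/- Let (A, Φ) be a C*-dynamical system with Φ a unital *-homomorphism, λ ∈ 𝕋, and suppose u ∈ A_λ is an isometry (u*u = 1). Then for every Φ-invariant state ω, the vector π_ω(u) ξ_ω is a unit eigenvector of the covariant GNS isometry V_{ω,Φ} with eigenvalue λ; in particular λ belongs to the full peripheral pure-point spectrum σ_pp^{(ph,f)}(Φ). -/
open scoped InnerProductSpace

universe u

/-- A covariant cyclic (GNS) representation of a C*-dynamical system `(A, Φ)`,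
corresponding to a `Φ`-invariant state (every `Φ`-invariant state gives rise to
such a representation via the GNS construction, and conversely the vector state
of such a representation is `Φ`-invariant). -/
structure CovGNS {A : Type*} [NormedRing A] [StarRing A] [CStarRing A]
    [NormedAlgebra ℂ A] [StarModule ℂ A] [CompleteSpace A]
    (Φ : A →⋆ₐ[ℂ] A) where
  H : Type u
  [grp : NormedAddCommGroup H]
  [ips : InnerProductSpace ℂ H]
  [cpl : CompleteSpace H]
  π : A →⋆ₐ[ℂ] (H →L[ℂ] H)
  ξ : H
  V : H →L[ℂ] H
  norm_ξ : ‖ξ‖ = 1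
  cyclic : Dense ((Submodule.span ℂ (Set.range fun a : A => π a ξ) : Submodule ℂ H) : Set H)
  isom : ∀ x : H, ‖V x‖ = ‖x‖
  fixes : V ξ = ξ
  covariant : ∀ a : A, V (π a ξ) = π (Φ a) ξ

attribute [instance] CovGNS.grp CovGNS.ips CovGNS.cpl

/-! A *-representation sends an isometry `u` of `A` to an isometry of `H`, so `π u ξ` is a unit
vector; covariance turns `Φ u = λ u` into `V (π u ξ) = λ π u ξ`. -/

theorem StarAlgHom.norm_map_apply_of_star_mul_self_eq_one {𝕜 A H : Type*} [RCLike 𝕜]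
    [Semiring A] [Algebra 𝕜 A] [Star A] [NormedAddCommGroup H] [InnerProductSpace 𝕜 H]
    [CompleteSpace H] (π : A →⋆ₐ[𝕜] (H →L[𝕜] H)) {u : A} (hu : star u * u = 1) (x : H) :
    ‖π u x‖ = ‖x‖ := by
  refine (π u).norm_map_iff_adjoint_comp_self.mpr ?_ x
  rw [← ContinuousLinearMap.star_eq_adjoint, ← map_star, ← ContinuousLinearMap.mul_def, ← map_mul,
    hu, map_one]

namespace CovGNS

variable {A : Type*} [NormedRing A] [StarRing A] [CStarRing A] [NormedAlgebra ℂ A]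
  [StarModule ℂ A] [CompleteSpace A] {Φ : A →⋆ₐ[ℂ] A} (R : CovGNS Φ)

theorem norm_π_apply_ξ_of_star_mul_self_eq_one {u : A} (hu : star u * u = 1) :
    ‖R.π u R.ξ‖ = 1 := by
  rw [R.π.norm_map_apply_of_star_mul_self_eq_one hu, R.norm_ξ]

theorem V_π_apply_ξ_of_map_eq_smul {u : A} {lam : ℂ} (hΦu : Φ u = lam • u) :
    R.V (R.π u R.ξ) = lam • R.π u R.ξ := by
  rw [R.covariant, hΦu, map_smul, smul_apply]

end CovGNS

theorem isometry_eigenvector_gives_full_spectrum_general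
    {A : Type*} [NormedRing A] [StarRing A] [CStarRing A] [NormedAlgebra ℂ A]
    [StarModule ℂ A] [CompleteSpace A]
    (Φ : A →⋆ₐ[ℂ] A) (lam : ℂ)
    (u : A) (hu : star u * u = 1) (hΦu : Φ u = lam • u) :
    ∀ R : CovGNS Φ,
      ‖R.π u R.ξ‖ = 1 ∧ R.V (R.π u R.ξ) = lam • R.π u R.ξ ∧
        ∃ x : R.H, x ≠ 0 ∧ R.V x = lam • x := by
  intro R
  have hnorm := R.norm_π_apply_ξ_of_star_mul_self_eq_one hu
  have heig := R.V_π_apply_ξ_of_map_eq_smul hΦu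
  exact ⟨hnorm, heig, R.π u R.ξ, norm_ne_zero_iff.mp (hnorm ▸ one_ne_zero), heig⟩

/-- If `u ∈ A_λ` is an isometry (`u* u = 1`) with `λ ∈ 𝕋`, then for
every `Φ`-invariant state `ω` the vector `π_ω(u) ξ_ω` is a unit eigenvector of the
covariant GNS isometry `V_{ω,Φ}` with eigenvalue `λ`; in particular `λ` lies in
the full peripheral pure-point spectrum `σ_pp^{(ph,f)}(Φ)`. -/
theorem isometry_eigenvector_gives_full_spectrum
    {A : Type*} [NormedRing A] [StarRing A] [CStarRing A] [NormedAlgebra ℂ A]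
    [StarModule ℂ A] [CompleteSpace A]
    (Φ : A →⋆ₐ[ℂ] A) (lam : ℂ) (hlam : ‖lam‖ = 1)
    (u : A) (hu : star u * u = 1) (hΦu : Φ u = lam • u) :
    ∀ R : CovGNS Φ,
      ‖R.π u R.ξ‖ = 1 ∧ R.V (R.π u R.ξ) = lam • R.π u R.ξ ∧
        ∃ x : R.H, x ≠ 0 ∧ R.V x = lam • x :=
  isometry_eigenvector_gives_full_spectrum_general Φ lam u hu hΦu
end

section
/- Let (A, Φ) be uniquely ergodic with respect to the fixed-point subalgebra, i.e. the averages (1/n) ∑_{k=0}^{n-1} Φ^k converge pointwise in norm to a conditional expectation E₁ onto A^Φ. If λ ∈ 𝕋 and u ∈ A_λ is an isometry, then for every x ∈ A, (1/n) ∑_{k=0}^{n-1} λ^{-k} Φ^k(x) converges in norm to E₁(x u*) u. -/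
open Filter Finset

/-! Since `Φ` is multiplicative and `u* u = 1`, `Φᵏ(x u*) u = λ̄ᵏ Φᵏ(x) u* u = λ⁻ᵏ Φᵏ(x)`, so the
twisted averages of `x` are the ordinary averages of `x u*` multiplied on the right by `u`. -/

namespace StarAlgHom

section

variable {R A : Type*} [CommSemiring R] [Semiring A] [Algebra R A] [Star A]

theorem coe_pow (Φ : A →⋆ₐ[R] A) (k : ℕ) : ⇑(Φ ^ k) = (⇑Φ)^[k] := by
  induction k with
  | zero => rfl
  | succ k ih => rw [pow_succ', Function.iterate_succ', ← ih]; rfl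

theorem pow_apply_eq_pow_smul_of_apply_eq_smul (Φ : A →⋆ₐ[R] A) {u : A} {lam : R}
    (hΦu : Φ u = lam • u) (k : ℕ) : (Φ ^ k) u = lam ^ k • u := by
  rw [coe_pow]
  induction k with
  | zero => simp
  | succ k ih => rw [Function.iterate_succ_apply', ih, map_smul, hΦu, smul_smul, pow_succ]

end

theorem pow_apply_mul_star_mul_of_apply_eq_smul {R A : Type*} [CommSemiring R] [StarRing R]
    [Semiring A] [StarRing A] [Algebra R A] [StarModule R A] (Φ : A →⋆ₐ[R] A) {u : A} {lam : R}
    (hu : star u * u = 1) (hΦu : Φ u = lam • u) (k : ℕ) (x : A) :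
    (Φ ^ k) (x * star u) * u = star lam ^ k • (Φ ^ k) x := by
  rw [map_mul, map_star, pow_apply_eq_pow_smul_of_apply_eq_smul Φ hΦu, star_smul, star_pow,
    mul_smul_comm, smul_mul_assoc, mul_assoc, hu, mul_one]

end StarAlgHom

theorem cesaro_tendsto_E_isometry_general
    {A : Type*} [NormedRing A] [StarRing A] [NormedAlgebra ℂ A]
    [StarModule ℂ A]
    (Φ : A →⋆ₐ[ℂ] A) (E₁ : A → A)
    (hE : ∀ x : A,
      Tendsto (fun n : ℕ => (n : ℂ)⁻¹ • ∑ k ∈ range n, (⇑Φ)^[k] x)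
        atTop (nhds (E₁ x)))
    (lam : ℂ) (hlam : ‖lam‖ = 1)
    (u : A) (hu : star u * u = 1) (hΦu : Φ u = lam • u) (x : A) :
    Tendsto (fun n : ℕ => (n : ℂ)⁻¹ • ∑ k ∈ range n, lam⁻¹ ^ k • (⇑Φ)^[k] x)
      atTop (nhds (E₁ (x * star u) * u)) := by
  convert (hE (x * star u)).mul_const u using 2 with n
  simp only [smul_mul_assoc, sum_mul, ← StarAlgHom.coe_pow,
    Φ.pow_apply_mul_star_mul_of_apply_eq_smul hu hΦu, Complex.inv_eq_conj hlam]
  rfl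

/-- Let `(A, Φ)` be uniquely ergodic with respect to the fixed-point
subalgebra, i.e. the averages `(1/n) ∑_{k<n} Φ^k(x)` converge in norm to `E₁ x`
for every `x`. If `λ ∈ 𝕋` and `u ∈ A_λ` is an isometry (`u* u = 1`), then for
every `x ∈ A` the averages `(1/n) ∑_{k<n} λ^{-k} Φ^k(x)` converge in norm to
`E₁(x u*) u`. -/
theorem cesaro_tendsto_E_isometry
    {A : Type*} [NormedRing A] [StarRing A] [CStarRing A] [NormedAlgebra ℂ A]
    [StarModule ℂ A] [CompleteSpace A]
    (Φ : A →⋆ₐ[ℂ] A) (E₁ : A → A)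
    (hE : ∀ x : A,
      Tendsto (fun n : ℕ => (n : ℂ)⁻¹ • ∑ k ∈ range n, (⇑Φ)^[k] x)
        atTop (nhds (E₁ x)))
    (lam : ℂ) (hlam : ‖lam‖ = 1)
    (u : A) (hu : star u * u = 1) (hΦu : Φ u = lam • u) (x : A) :
    Tendsto (fun n : ℕ => (n : ℂ)⁻¹ • ∑ k ∈ range n, lam⁻¹ ^ k • (⇑Φ)^[k] x)
      atTop (nhds (E₁ (x * star u) * u)) :=
  cesaro_tendsto_E_isometry_general Φ E₁ hE lam hlam u hu hΦu x
end

section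
/- Let (A, Φ) be uniquely ergodic with respect to the fixed-point subalgebra with conditional expectation E₁, λ ∈ 𝕋, and u ∈ A_λ a co-isometry (uu* = 1). Then for every x ∈ A, (1/n) ∑_{k=0}^{n-1} λ^{-k} Φ^k(x) converges in norm to u E₁(u* x). Moreover the resulting map E_λ(x) := u E₁(u* x) is a norm-one linear projection of A onto A_λ. -/
/-!
Since `|λ| = 1`, `Φ(u*) = λ⁻¹ u*`, so multiplicativity gives `Φᵏ(u* x) = λ⁻ᵏ u* Φᵏ(x)` and,
as `u u* = 1`, `u` times the Cesàro means of `Φ` at `u* x` are the Cesàro means of the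
contraction `T = λ⁻¹ Φ` at `x`. They therefore converge to `E_λ(x) = u E₁(u* x)`, and the
properties of `E_λ` are those of any pointwise Cesàro limit `P` of a linear contraction `T`:
`P` is linear and contractive, `T ∘ P = P` because `T Mₙ - Mₙ = (Tⁿ - 1)/n → 0`, and `P` fixes
the fixed points of `T`, which for `T = λ⁻¹ Φ` form `A_λ`.
-/

open Filter Finset Topology

section CesaroMean

variable {𝕜 E : Type*}

variable (𝕜) in
def cesaroMean [DivisionRing 𝕜] [AddCommMonoid E] [Module 𝕜 E] (f : E → E)
    (n : ℕ) (x : E) : E :=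
  (n : 𝕜)⁻¹ • ∑ k ∈ range n, f^[k] x

theorem cesaroMean_of_apply_eq [DivisionRing 𝕜] [CharZero 𝕜] [AddCommMonoid E] [Module 𝕜 E]
    {f : E → E} {x : E} (hx : f x = x) {n : ℕ} (hn : n ≠ 0) : cesaroMean 𝕜 f n x = x := by
  simp [cesaroMean, Function.iterate_fixed hx, ← Nat.cast_smul_eq_nsmul 𝕜, smul_smul, hn]

theorem cesaroMean_smul [Field 𝕜] [AddCommMonoid E] [Module 𝕜 E] (c : 𝕜) (T : E →ₗ[𝕜] E)
    (n : ℕ) (x : E) : cesaroMean 𝕜 ⇑(c • T) n x = (n : 𝕜)⁻¹ • ∑ k ∈ range n, c ^ k • T^[k] x := by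
  simp only [cesaroMean, ← Module.End.coe_pow, smul_pow, LinearMap.smul_apply]

theorem apply_cesaroMean_sub [DivisionRing 𝕜] [AddCommGroup E] [Module 𝕜 E] (T : E →ₗ[𝕜] E)
    (n : ℕ) (x : E) :
    T (cesaroMean 𝕜 T n x) - cesaroMean 𝕜 T n x = (n : 𝕜)⁻¹ • (T^[n] x - x) := by
  rw [cesaroMean, map_smul, map_sum, ← smul_sub, ← sum_sub_distrib]
  simp only [← Function.iterate_succ_apply' T]
  rw [sum_range_sub (fun k => T^[k] x), Function.iterate_zero_apply]

theorem norm_iterate_le [Norm E] {f : E → E} (hf : ∀ y, ‖f y‖ ≤ ‖y‖) (k : ℕ) (x : E) :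
    ‖f^[k] x‖ ≤ ‖x‖ := by
  induction k generalizing x with
  | zero => rfl
  | succ k ih => exact (ih (f x)).trans (hf x)

variable [RCLike 𝕜] [NormedAddCommGroup E] [NormedSpace 𝕜 E]

theorem norm_cesaroMean_le {f : E → E} (hf : ∀ y, ‖f y‖ ≤ ‖y‖) (n : ℕ) (x : E) :
    ‖cesaroMean 𝕜 f n x‖ ≤ ‖x‖ := by
  rcases eq_or_ne n 0 with rfl | hn
  · simp [cesaroMean]
  calc ‖cesaroMean 𝕜 f n x‖ ≤ (n : ℝ)⁻¹ * ∑ k ∈ range n, ‖f^[k] x‖ := by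
        rw [cesaroMean, norm_smul, norm_inv, RCLike.norm_natCast]
        gcongr
        exact norm_sum_le _ _
    _ ≤ (n : ℝ)⁻¹ * (n * ‖x‖) := by
        gcongr
        simpa using sum_le_sum fun k (_ : k ∈ range n) => norm_iterate_le hf k x
    _ = ‖x‖ := by field_simp

theorem tendsto_apply_cesaroMean_sub {T : E →ₗ[𝕜] E} (hT : ∀ y, ‖T y‖ ≤ ‖y‖) (x : E) :
    Tendsto (fun n => T (cesaroMean 𝕜 T n x) - cesaroMean 𝕜 T n x) atTop (𝓝 0) := by
  simp only [apply_cesaroMean_sub]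
  refine tendsto_inv_atTop_nhds_zero_nat.zero_smul_isBoundedUnder_le
    (isBoundedUnder_of ⟨‖x‖ + ‖x‖, fun n => ?_⟩)
  exact (norm_sub_le _ _).trans (add_le_add (norm_iterate_le hT n x) le_rfl)

variable {T : E →ₗ[𝕜] E} {P : E → E}
  (hP : ∀ x, Tendsto (fun n => cesaroMean 𝕜 T n x) atTop (𝓝 (P x)))
include hP

theorem isLinearMap_of_tendsto_cesaroMean : IsLinearMap 𝕜 P :=
  (linearMapOfTendsto P (fun n : ℕ => (n : 𝕜)⁻¹ • ∑ k ∈ range n, T ^ k)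
    (tendsto_pi_nhds.2 fun x => by
      simpa [cesaroMean, Module.End.coe_pow] using hP x)).isLinear

theorem norm_le_of_tendsto_cesaroMean (hT : ∀ y, ‖T y‖ ≤ ‖y‖) (x : E) : ‖P x‖ ≤ ‖x‖ :=
  le_of_tendsto' (hP x).norm fun n => norm_cesaroMean_le hT n x

theorem apply_eq_of_tendsto_cesaroMean (hT : ∀ y, ‖T y‖ ≤ ‖y‖) (x : E) : T (P x) = P x := by
  have hTc : Continuous T := AddMonoidHomClass.continuous_of_bound T 1 fun y => by simpa using hT y
  refine tendsto_nhds_unique ((hTc.tendsto _).comp (hP x)) ?_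
  simpa [Function.comp_def] using (hP x).add (tendsto_apply_cesaroMean_sub hT x)

theorem eq_of_tendsto_cesaroMean_of_apply_eq {x : E} (hx : T x = x) : P x = x :=
  tendsto_nhds_unique (hP x) <| tendsto_const_nhds.congr' <|
    (eventually_ne_atTop 0).mono fun _ hn => (cesaroMean_of_apply_eq hx hn).symm

end CesaroMean

section Eigenvector

variable {𝕜 A F : Type*} [Field 𝕜] [Ring A] [Algebra 𝕜 A] [FunLike F A A] [AlgHomClass F 𝕜 A A]
  {Φ : F} {a : A} {μ : 𝕜}

theorem iterate_map_mul_of_apply_eq_smul (ha : Φ a = μ • a) (k : ℕ) (x : A) :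
    (⇑Φ)^[k] (a * x) = μ ^ k • (a * (⇑Φ)^[k] x) := by
  induction k with
  | zero => simp
  | succ k ih =>
    rw [Function.iterate_succ_apply', ih, map_smul, map_mul, ha, Function.iterate_succ_apply',
      smul_mul_assoc, smul_smul, pow_succ]

theorem mul_cesaroMean_mul_of_apply_eq_smul (ha : Φ a = μ • a) {b : A} (hba : b * a = 1)
    (n : ℕ) (x : A) :
    b * cesaroMean 𝕜 Φ n (a * x) = (n : 𝕜)⁻¹ • ∑ k ∈ range n, μ ^ k • (⇑Φ)^[k] x := by
  rw [cesaroMean, mul_smul_comm, mul_sum]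
  congr 1
  refine sum_congr rfl fun k _ => ?_
  rw [iterate_map_mul_of_apply_eq_smul ha, mul_smul_comm, ← mul_assoc, hba, one_mul]

end Eigenvector

/-- Let `(A, Φ)` be uniquely ergodic with respect to the fixed-point
subalgebra, with conditional expectation `E₁` the pointwise norm limit of the
Cesàro averages. If `λ ∈ 𝕋` and `u ∈ A_λ` is a co-isometry (`u u* = 1`), then for
every `x ∈ A` the averages `(1/n) ∑_{k<n} λ^{-k} Φ^k(x)` converge in norm to
`u E₁(u* x)`; moreover `E_λ(x) := u E₁(u* x)` is a norm-one linear projection of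
`A` onto the eigenspace `A_λ`. -/
theorem cesaro_tendsto_E_coisometry
    {A : Type*} [NormedRing A] [StarRing A] [CStarRing A] [NormedAlgebra ℂ A]
    [StarModule ℂ A] [CompleteSpace A]
    (Φ : A →⋆ₐ[ℂ] A) (E₁ : A → A)
    (hE : ∀ x : A,
      Tendsto (fun n : ℕ => (n : ℂ)⁻¹ • ∑ k ∈ range n, (⇑Φ)^[k] x)
        atTop (nhds (E₁ x)))
    (lam : ℂ) (hlam : ‖lam‖ = 1)
    (u : A) (hu : u * star u = 1) (hΦu : Φ u = lam • u) :
    (∀ x : A,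
      Tendsto (fun n : ℕ => (n : ℂ)⁻¹ • ∑ k ∈ range n, lam⁻¹ ^ k • (⇑Φ)^[k] x)
        atTop (nhds (u * E₁ (star u * x)))) ∧
    -- `E_λ` is linear
    (∀ x y : A, u * E₁ (star u * (x + y)) = u * E₁ (star u * x) + u * E₁ (star u * y)) ∧
    (∀ (c : ℂ) (x : A), u * E₁ (star u * (c • x)) = c • (u * E₁ (star u * x))) ∧
    -- `E_λ` is a contraction, hence (being a projection onto `A_λ ∋ u`) has norm one
    (∀ x : A, ‖u * E₁ (star u * x)‖ ≤ ‖x‖) ∧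
    -- `E_λ` takes values in `A_λ` and restricts to the identity on `A_λ`:
    (∀ x : A, Φ (u * E₁ (star u * x)) = lam • (u * E₁ (star u * x))) ∧
    (∀ y : A, Φ y = lam • y → u * E₁ (star u * y) = y) := by
  let _ : CStarAlgebra A := {}
  have hlam0 : lam ≠ 0 := norm_ne_zero_iff.mp (by simp [hlam])
  have hΦ_star_u : Φ (star u) = lam⁻¹ • star u := by
    rw [map_star, hΦu, star_smul, RCLike.star_def, ← RCLike.inv_eq_conj hlam]
  set T : A →ₗ[ℂ] A := lam⁻¹ • Φ.toLinearMap
  have hT : ∀ y, ‖T y‖ ≤ ‖y‖ := fun y => by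
    simpa [T, norm_smul, hlam] using NonUnitalStarAlgHom.norm_apply_le Φ y
  have hTE : ∀ x, Tendsto (fun n => cesaroMean ℂ T n x) atTop (𝓝 (u * E₁ (star u * x))) :=
    fun x => ((hE (star u * x)).const_mul u).congr fun n => by
      rw [cesaroMean_smul]
      exact mul_cesaroMean_mul_of_apply_eq_smul hΦ_star_u hu n x
  have hlin := isLinearMap_of_tendsto_cesaroMean hTE
  refine ⟨fun x => ?_, hlin.map_add, hlin.map_smul, norm_le_of_tendsto_cesaroMean hTE hT,
    fun x => ?_, fun y hy => ?_⟩
  · simpa only [T, cesaroMean_smul, AlgHom.coe_toLinearMap, StarAlgHom.coe_toAlgHom] using hTE x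
  · simpa [T, inv_smul_eq_iff₀ hlam0] using apply_eq_of_tendsto_cesaroMean hTE hT x
  · exact eq_of_tendsto_cesaroMean_of_apply_eq hTE (by simp [T, hy, hlam0])
end

section
/- Let (A, Φ) be a C*-dynamical system with Φ a unital *-homomorphism such that the Cesàro averages (1/n)∑_{k<n} Φ^k converge pointwise in norm to E₁. If λ ∈ 𝕋, a ∈ A_λ is invertible, then for every x ∈ A, (1/n) ∑_{k=0}^{n-1} λ^{-k} Φ^k(x) converges in norm and its limit equals both a E₁(a^{-1} x) and E₁(x a^{-1}) a. -/
open Filter Finset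

/-! Conjugating by the eigenvector turns the twisted averages into plain ones: since
`Φ b = λ⁻¹ b` for `b = a⁻¹`, multiplicativity of `Φ^k` gives `a Φ^k(b x) = λ^{-k} Φ^k(x) = Φ^k(x b) a`.
Hence the twisted averages are `a` times the Cesàro averages of `b x`, and also the Cesàro
averages of `x b` times `a`; both converge, and uniqueness of limits identifies the two. -/

section Eigenvector

variable {R A F : Type*} [FunLike F A A]

theorem map_eq_inv_smul_of_map_eq_smul [Field R] [Ring A] [Algebra R A]
    [MonoidHomClass F A A] (f : F) {c : R} {a b : A} (hab : a * b = 1) (hba : b * a = 1)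
    (ha : f a = c • a) : f b = c⁻¹ • b := by
  rcases eq_or_ne c 0 with rfl | hc
  · have h01 : (0 : A) = 1 := by
      rw [← map_one f, ← hba, map_mul, ha, zero_smul, mul_zero]
    have := subsingleton_of_zero_eq_one h01
    exact Subsingleton.elim _ _
  · refine left_inv_eq_right_inv (a := f a) ?_ ?_
    · rw [← map_mul, hba, map_one]
    · rw [ha, smul_mul_smul_comm, mul_inv_cancel₀ hc, hab, one_smul]

variable [CommSemiring R] [Semiring A] [Algebra R A] [AlgHomClass F R A A]

theorem iterate_map_eq_pow_smul_of_map_eq_smul (f : F) {μ : R} {b : A} (hb : f b = μ • b)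
    (k : ℕ) : (⇑f)^[k] b = μ ^ k • b := by
  induction k with
  | zero => simp
  | succ k ih => rw [Function.iterate_succ_apply', ih, map_smul, hb, smul_smul, pow_succ]

theorem mul_iterate_map_mul_eq_pow_smul (f : F) {μ : R} {a b : A} (hab : a * b = 1)
    (hb : f b = μ • b) (k : ℕ) (y : A) : a * (⇑f)^[k] (b * y) = μ ^ k • (⇑f)^[k] y := by
  rw [iterate_map_mul, iterate_map_eq_pow_smul_of_map_eq_smul f hb, smul_mul_assoc,
    mul_smul_comm, ← mul_assoc, hab, one_mul]

theorem iterate_map_mul_mul_eq_pow_smul (f : F) {μ : R} {a b : A} (hba : b * a = 1)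
    (hb : f b = μ • b) (k : ℕ) (y : A) : (⇑f)^[k] (y * b) * a = μ ^ k • (⇑f)^[k] y := by
  rw [iterate_map_mul, iterate_map_eq_pow_smul_of_map_eq_smul f hb, mul_smul_comm,
    smul_mul_assoc, mul_assoc, hba, mul_one]

end Eigenvector

theorem cesaro_tendsto_of_invertible_eigenvector_general
    {A : Type*} [NormedRing A] [StarRing A] [NormedAlgebra ℂ A]
    (Φ : A →⋆ₐ[ℂ] A) (E₁ : A → A)
    (hE : ∀ x : A,
      Tendsto (fun n : ℕ => (n : ℂ)⁻¹ • ∑ k ∈ range n, (⇑Φ)^[k] x)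
        atTop (nhds (E₁ x)))
    (lam : ℂ)
    (a b : A) (hab : a * b = 1) (hba : b * a = 1) (hΦa : Φ a = lam • a)
    (x : A) :
    Tendsto (fun n : ℕ => (n : ℂ)⁻¹ • ∑ k ∈ range n, lam⁻¹ ^ k • (⇑Φ)^[k] x)
        atTop (nhds (a * E₁ (b * x))) ∧
      a * E₁ (b * x) = E₁ (x * b) * a := by
  have hΦb : Φ b = lam⁻¹ • b := map_eq_inv_smul_of_map_eq_smul Φ hab hba hΦa
  have twisted_eq_left : (fun n : ℕ => (n : ℂ)⁻¹ • ∑ k ∈ range n, lam⁻¹ ^ k • (⇑Φ)^[k] x) =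
      fun n : ℕ => a * ((n : ℂ)⁻¹ • ∑ k ∈ range n, (⇑Φ)^[k] (b * x)) := by
    simp only [mul_smul_comm, mul_sum, mul_iterate_map_mul_eq_pow_smul Φ hab hΦb]
  have twisted_eq_right : (fun n : ℕ => (n : ℂ)⁻¹ • ∑ k ∈ range n, lam⁻¹ ^ k • (⇑Φ)^[k] x) =
      fun n : ℕ => ((n : ℂ)⁻¹ • ∑ k ∈ range n, (⇑Φ)^[k] (x * b)) * a := by
    simp only [smul_mul_assoc, sum_mul, iterate_map_mul_mul_eq_pow_smul Φ hba hΦb]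
  have tendsto_left := twisted_eq_left ▸ (hE (b * x)).const_mul a
  have tendsto_right := twisted_eq_right ▸ (hE (x * b)).mul_const a
  exact ⟨tendsto_left, tendsto_nhds_unique tendsto_left tendsto_right⟩

/-- Suppose the Cesàro averages of the unital *-homomorphism `Φ`
converge pointwise in norm to `E₁`. If `λ ∈ 𝕋` and `a ∈ A_λ` is invertible (with
inverse `b`), then for every `x ∈ A` the averages `(1/n) ∑_{k<n} λ^{-k} Φ^k(x)`
converge in norm, with limit `a E₁(a⁻¹ x) = E₁(x a⁻¹) a`. -/
theorem cesaro_tendsto_of_invertible_eigenvector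
    {A : Type*} [NormedRing A] [StarRing A] [CStarRing A] [NormedAlgebra ℂ A]
    [StarModule ℂ A] [CompleteSpace A]
    (Φ : A →⋆ₐ[ℂ] A) (E₁ : A → A)
    (hE : ∀ x : A,
      Tendsto (fun n : ℕ => (n : ℂ)⁻¹ • ∑ k ∈ range n, (⇑Φ)^[k] x)
        atTop (nhds (E₁ x)))
    (lam : ℂ) (hlam : ‖lam‖ = 1)
    (a b : A) (hab : a * b = 1) (hba : b * a = 1) (hΦa : Φ a = lam • a)
    (x : A) :
    Tendsto (fun n : ℕ => (n : ℂ)⁻¹ • ∑ k ∈ range n, lam⁻¹ ^ k • (⇑Φ)^[k] x)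
        atTop (nhds (a * E₁ (b * x))) ∧
      a * E₁ (b * x) = E₁ (x * b) * a :=
  cesaro_tendsto_of_invertible_eigenvector_general Φ E₁ hE lam a b hab hba hΦa x
end

section
/- Let (A, Φ) be a C*-dynamical system whose Cesàro averages converge pointwise in norm to E₁, λ ∈ 𝕋, and suppose a_1,…,a_m, b_1,…,b_m ∈ A_λ satisfy ∑_{j=1}^m a_j* b_j = 1. Then for every x ∈ A, (1/n) ∑_{k=0}^{n-1} λ^{-k} Φ^k(x) converges in norm to ∑_{j=1}^m E₁(x a_j*) b_j. -/
open Filter Finset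

/-!
Since `Φ` is a `⋆`-homomorphism and `|λ| = 1`, each `a_j*` is an eigenvector of `Φ` with eigenvalue
`λ⁻¹`, so by multiplicativity `λ^{-k} Φ^k(x) = Φ^k(x) λ^{-k} ∑ a_j* b_j = ∑ Φ^k(x a_j*) b_j`.
Averaging over `k < n` and letting `n → ∞` turns each `Φ^k(x a_j*)` into `E₁(x a_j*)`.
-/

theorem iterate_map_eq_pow_smul {R M F : Type*} [Monoid R] [MulAction R M] [FunLike F M M]
    [MulActionHomClass F R M M] (f : F) {c : R} {y : M} (hy : f y = c • y) (k : ℕ) :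
    (⇑f)^[k] y = c ^ k • y := by
  induction k with
  | zero => simp
  | succ k ih => rw [Function.iterate_succ_apply', ih, map_smul, hy, smul_smul, pow_succ]

theorem map_star_eq_inv_smul_star {𝕜 A F : Type*} [RCLike 𝕜] [AddCommMonoid A] [Module 𝕜 A]
    [StarAddMonoid A] [StarModule 𝕜 A] [FunLike F A A] [StarHomClass F A A]
    [MulActionHomClass F 𝕜 A A] (f : F) {c : 𝕜} (hc : ‖c‖ = 1) {y : A} (hy : f y = c • y) :
    f (star y) = c⁻¹ • star y := by
  rw [map_star, hy, star_smul, RCLike.inv_eq_conj hc, RCLike.star_def]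

theorem smul_apply_eq_sum_apply_mul_mul {R A ι : Type*} [Monoid R] [Semiring A]
    [DistribMulAction R A] [IsScalarTower R A A] [SMulCommClass R A A]
    (g : A → A) (hg : ∀ u v, g (u * v) = g u * g v) (s : Finset ι) (c b : ι → A) {μ : R}
    (hc : ∀ j ∈ s, g (c j) = μ • c j) (hcb : ∑ j ∈ s, c j * b j = 1) (x : A) :
    μ • g x = ∑ j ∈ s, g (x * c j) * b j :=
  calc μ • g x = μ • (g x * ∑ j ∈ s, c j * b j) := by rw [hcb, mul_one]
    _ = ∑ j ∈ s, g (x * c j) * b j := by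
      rw [mul_sum, smul_sum]
      refine sum_congr rfl fun j hj => ?_
      rw [hg, hc j hj, mul_smul_comm, smul_mul_assoc, mul_assoc]

theorem cesaro_tendsto_of_partition_of_unity_general
    {A : Type*} [NormedRing A] [StarRing A] [NormedAlgebra ℂ A]
    [StarModule ℂ A]
    (Φ : A →⋆ₐ[ℂ] A) (E₁ : A → A)
    (hE : ∀ x : A,
      Tendsto (fun n : ℕ => (n : ℂ)⁻¹ • ∑ k ∈ range n, (⇑Φ)^[k] x)
        atTop (nhds (E₁ x)))
    (lam : ℂ) (hlam : ‖lam‖ = 1)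
    (m : ℕ) (a b : Fin m → A)
    (ha : ∀ j, Φ (a j) = lam • a j)
    (hsum : ∑ j, star (a j) * b j = 1)
    (x : A) :
    Tendsto (fun n : ℕ => (n : ℂ)⁻¹ • ∑ k ∈ range n, lam⁻¹ ^ k • (⇑Φ)^[k] x)
      atTop (nhds (∑ j, E₁ (x * star (a j)) * b j)) := by
  have twisted_eq_sum (k : ℕ) :
      lam⁻¹ ^ k • (⇑Φ)^[k] x = ∑ j, (⇑Φ)^[k] (x * star (a j)) * b j :=
    smul_apply_eq_sum_apply_mul_mul _ (iterate_map_mul Φ k) _ _ _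
      (fun j _ => iterate_map_eq_pow_smul Φ (map_star_eq_inv_smul_star Φ hlam (ha j)) k) hsum x
  have average_eq_sum (n : ℕ) :
      (n : ℂ)⁻¹ • ∑ k ∈ range n, lam⁻¹ ^ k • (⇑Φ)^[k] x =
        ∑ j, ((n : ℂ)⁻¹ • ∑ k ∈ range n, (⇑Φ)^[k] (x * star (a j))) * b j := by
    simp only [twisted_eq_sum, smul_mul_assoc, sum_mul]
    rw [sum_comm, smul_sum]
  simp only [average_eq_sum]
  exact tendsto_finsetSum _ fun j _ => (hE _).mul_const (b j)

/-- Suppose the Cesàro averages of the unital *-homomorphism `Φ`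
converge pointwise in norm to `E₁`, `λ ∈ 𝕋`, and `a₁,…,a_m, b₁,…,b_m ∈ A_λ`
satisfy `∑_j a_j* b_j = 1`. Then for every `x ∈ A` the averages
`(1/n) ∑_{k<n} λ^{-k} Φ^k(x)` converge in norm to `∑_j E₁(x a_j*) b_j`. -/
theorem cesaro_tendsto_of_partition_of_unity
    {A : Type*} [NormedRing A] [StarRing A] [CStarRing A] [NormedAlgebra ℂ A]
    [StarModule ℂ A] [CompleteSpace A]
    (Φ : A →⋆ₐ[ℂ] A) (E₁ : A → A)
    (hE : ∀ x : A,
      Tendsto (fun n : ℕ => (n : ℂ)⁻¹ • ∑ k ∈ range n, (⇑Φ)^[k] x)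
        atTop (nhds (E₁ x)))
    (lam : ℂ) (hlam : ‖lam‖ = 1)
    (m : ℕ) (a b : Fin m → A)
    (ha : ∀ j, Φ (a j) = lam • a j) (hb : ∀ j, Φ (b j) = lam • b j)
    (hsum : ∑ j, star (a j) * b j = 1)
    (x : A) :
    Tendsto (fun n : ℕ => (n : ℂ)⁻¹ • ∑ k ∈ range n, lam⁻¹ ^ k • (⇑Φ)^[k] x)
      atTop (nhds (∑ j, E₁ (x * star (a j)) * b j)) :=
  cesaro_tendsto_of_partition_of_unity_general Φ E₁ hE lam hlam m a b ha hsum x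
end
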